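/- The function u₂(x,t) = c₂ t^{-1/2} (x²/(4t))^{(1−2α)/2} · ₁F₁(1−α; (3−2α)/2; −x²/(4t)) satisfies u_t − u_{xx} − (2α/x) u_x = 0 for all x > 0 and t > 0. -/

import Mathlib

/-- Pochhammer symbol (a)_m = a(a+1)⋯(a+m−1). -/
noncomputable def poch (a : ℝ) (m : ℕ) : ℝ := ∏ i ∈ Finset.range m, (a + i)

/-- The confluent hypergeometric function ₁F₁(a;c;x). -/
noncomputable def F11 (a c x : ℝ) : ℝ :=
  ∑' m : ℕ, poch a m / (poch c m * (Nat.factorial m : ℝ)) * x ^ m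

/-- u₂(x,t) = c₂ t^{-1/2} (x²/(4t))^{(1−2α)/2} ₁F₁(1−α; (3−2α)/2; −x²/(4t)). -/
noncomputable def uSol2 (α c₂ x t : ℝ) : ℝ :=
  c₂ * t ^ (-(1 / 2) : ℝ) * (x ^ 2 / (4 * t)) ^ (((1 : ℝ) - 2 * α) / 2)
    * F11 (1 - α) ((3 - 2 * α) / 2) (-(x ^ 2) / (4 * t))

/-! For `x, t > 0`, `u₂ = ∑ₘ Kₘ x^(1-2α+2m) t^(α-1-m)`, and the `Kₘ` are (up to a geometric
factor) the coefficients of `₁F₁`, which decay fast enough for every such series to be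
differentiated term by term in `x` and in `t`. The radial operator `∂ₓₓ + (2α/x) ∂ₓ` kills the
`m = 0` term, since `1 - 2α` is a root of `p (p - 1 + 2α)`, and maps the `(m+1)`-st term to the
`t`-derivative of the `m`-th one: this is the recurrence
`4 (c + m) (m + 1) Kₘ₊₁ = -(a + m) Kₘ` of the `₁F₁(a; c; ·)` coefficients with `a = 1 - α`,
`c = (3 - 2α)/2`. So the equation telescopes. -/

open Filter Topology

theorem abs_add_mul_natCast_le_mul_two_pow (e k : ℝ) (m : ℕ) :
    |e + k * m| ≤ (|e| + |k|) * 2 ^ m := by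
  have h1 : (1 : ℝ) ≤ 2 ^ m := one_le_pow₀ (by norm_num)
  have h2 : (m : ℝ) ≤ 2 ^ m := by exact_mod_cast (Nat.lt_two_pow_self).le
  calc |e + k * m| ≤ |e| + |k| * m := by
        simpa [abs_mul] using abs_add_le e (k * m)
    _ ≤ (|e| + |k|) * 2 ^ m := by nlinarith [abs_nonneg e, abs_nonneg k]

def EntireCoeffs (b : ℕ → ℝ) : Prop :=
  ∀ ρ : ℝ, Summable fun m => b m * ρ ^ m

namespace EntireCoeffs

theorem of_ratio {b q : ℕ → ℝ} (hb : ∀ m, b (m + 1) = b m * q m)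
    (hq : Tendsto q atTop (𝓝 0)) : EntireCoeffs b := by
  intro ρ
  have hsmall : ∀ᶠ m in atTop, ‖q m * ρ‖ ≤ 1 / 2 := by
    have := (hq.mul_const ρ).norm
    rw [zero_mul, norm_zero] at this
    exact this.eventually (eventually_le_nhds (by norm_num))
  refine summable_of_ratio_norm_eventually_le (r := 1 / 2) (by norm_num) ?_
  filter_upwards [hsmall] with m hm
  calc ‖b (m + 1) * ρ ^ (m + 1)‖ = ‖q m * ρ‖ * ‖b m * ρ ^ m‖ := by
        rw [hb, pow_succ, ← norm_mul]; ring_nf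
    _ ≤ 1 / 2 * ‖b m * ρ ^ m‖ := by gcongr

theorem mul_rpow {b : ℕ → ℝ} (hb : EntireCoeffs b) {y : ℝ} (hy : 0 < y) (e k : ℝ) :
    EntireCoeffs fun m => b m * y ^ (e + k * m) := by
  intro ρ
  refine ((hb (y ^ k * ρ)).mul_right (y ^ e)).congr fun m => ?_
  simp only [Real.rpow_add hy, Real.rpow_mul_natCast hy.le, mul_pow]
  ring

theorem mul_add_mul_natCast {b : ℕ → ℝ} (hb : EntireCoeffs b) (e k : ℝ) :
    EntireCoeffs fun m => b m * (e + k * m) := by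
  intro ρ
  refine .of_norm_bounded (((hb (2 * ρ)).norm).mul_left (|e| + |k|)) fun m => ?_
  calc ‖b m * (e + k * m) * ρ ^ m‖ = |e + k * m| * (|b m| * |ρ| ^ m) := by
        simp only [Real.norm_eq_abs, abs_mul, abs_pow]; ring
    _ ≤ (|e| + |k|) * 2 ^ m * (|b m| * |ρ| ^ m) := by
        gcongr; exact abs_add_mul_natCast_le_mul_two_pow e k m
    _ = (|e| + |k|) * ‖b m * (2 * ρ) ^ m‖ := by
        simp only [Real.norm_eq_abs, abs_mul, abs_pow, mul_pow, abs_two]; ring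

end EntireCoeffs

theorem EntireCoeffs.summable_mul_rpow {b : ℕ → ℝ} (hb : EntireCoeffs b) {y : ℝ} (hy : 0 < y)
    (e k : ℝ) : Summable fun m => b m * y ^ (e + k * m) := by
  simpa using hb.mul_rpow hy e k 1

theorem rpow_le_rpow_add_rpow_of_mem_Icc {a b y : ℝ} (ha : 0 < a) (hy : y ∈ Set.Icc a b) (s : ℝ) :
    y ^ s ≤ a ^ s + b ^ s := by
  have hy0 : 0 < y := ha.trans_le hy.1
  rcases le_total s 0 with hs | hs
  · linarith [Real.rpow_le_rpow_of_nonpos ha hy.1 hs, Real.rpow_pos_of_pos (hy0.trans_le hy.2) s]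
  · linarith [Real.rpow_le_rpow hy0.le hy.2 hs, Real.rpow_pos_of_pos ha s]

theorem EntireCoeffs.hasDerivAt_tsum_mul_rpow {b : ℕ → ℝ} (hb : EntireCoeffs b) (e k : ℝ) {y : ℝ}
    (hy : 0 < y) :
    HasDerivAt (fun z => ∑' m, b m * z ^ (e + k * m))
      (∑' m, b m * (e + k * m) * y ^ (e - 1 + k * m)) y := by
  have hU : ∀ z ∈ Set.Ioo (y / 2) (2 * y), 0 < z := fun z hz => (half_pos hy).trans hz.1
  have hyU : y ∈ Set.Ioo (y / 2) (2 * y) := ⟨by linarith, by linarith⟩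
  set A := (y / 2) ^ (e - 1) + (2 * y) ^ (e - 1)
  set B := (y / 2) ^ k + (2 * y) ^ k
  have hB : 0 < B := by positivity
  have hbound : ∀ m, ∀ z ∈ Set.Ioo (y / 2) (2 * y),
      ‖b m * (e + k * m) * z ^ (e - 1 + k * m)‖ ≤ A * ‖b m * (e + k * m) * B ^ m‖ := by
    intro m z hz
    have hz0 := hU z hz
    have hIcc : z ∈ Set.Icc (y / 2) (2 * y) := Set.Ioo_subset_Icc_self hz
    rw [Real.rpow_add hz0, Real.rpow_mul_natCast hz0.le]
    simp only [norm_mul, norm_pow, Real.norm_eq_abs, abs_of_pos (Real.rpow_pos_of_pos hz0 _),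
      abs_of_pos hB]
    calc |b m| * |e + k * m| * (z ^ (e - 1) * (z ^ k) ^ m)
        ≤ |b m| * |e + k * m| * (A * B ^ m) := by
          gcongr
          · exact rpow_le_rpow_add_rpow_of_mem_Icc (half_pos hy) hIcc _
          · exact rpow_le_rpow_add_rpow_of_mem_Icc (half_pos hy) hIcc _
      _ = A * (|b m| * |e + k * m| * B ^ m) := by ring
  refine hasDerivAt_tsum_of_isPreconnected ((hb.mul_add_mul_natCast e k B).norm.mul_left A)
    isOpen_Ioo isPreconnected_Ioo (fun m z hz => ?_) hbound hyU (hb.summable_mul_rpow hy e k) hyU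
  refine ((Real.hasDerivAt_rpow_const (p := e + k * m) (Or.inl (hU z hz).ne')).const_mul
    (b m)).congr_deriv ?_
  rw [sub_add_eq_add_sub]
  ring

theorem poch_succ (a : ℝ) (m : ℕ) : poch a (m + 1) = poch a m * (a + m) :=
  Finset.prod_range_succ _ _

noncomputable def F11Coeff (a c : ℝ) (m : ℕ) : ℝ :=
  poch a m / (poch c m * (Nat.factorial m : ℝ))

-- No hypothesis on `c`: where `c + m` or `poch c m` vanishes, both sides are `0` since `x / 0 = 0`.
theorem F11Coeff_succ (a c : ℝ) (m : ℕ) :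
    F11Coeff a c (m + 1) = F11Coeff a c m * ((a + m) / ((c + m) * (m + 1))) := by
  rw [F11Coeff, F11Coeff, div_mul_div_comm, poch_succ, poch_succ, Nat.factorial_succ]
  push_cast
  ring_nf

theorem tendsto_F11_ratio (a c : ℝ) :
    Tendsto (fun m : ℕ => (a + m) / ((c + m) * (m + 1))) atTop (𝓝 0) := by
  have h := (tendsto_add_mul_div_add_mul_atTop_nhds a c 1 one_ne_zero).mul
    (tendsto_one_div_add_atTop_nhds_zero_nat (𝕜 := ℝ))
  rw [mul_zero] at h
  refine h.congr fun m => ?_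
  rw [div_mul_div_comm]
  ring_nf

theorem entireCoeffs_F11Coeff (a c : ℝ) : EntireCoeffs (F11Coeff a c) :=
  .of_ratio (F11Coeff_succ a c) (tendsto_F11_ratio a c)

theorem F11_eq_tsum (a c z : ℝ) : F11 a c z = ∑' m, F11Coeff a c m * z ^ m := rfl

noncomputable def uSol2Coeff (α c₂ : ℝ) (m : ℕ) : ℝ :=
  c₂ * 4 ^ ((2 * α - 1) / 2) * F11Coeff (1 - α) ((3 - 2 * α) / 2) m * (-1 / 4) ^ m

theorem entireCoeffs_uSol2Coeff (α c₂ : ℝ) : EntireCoeffs (uSol2Coeff α c₂) := fun ρ =>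
  ((entireCoeffs_F11Coeff _ _ (-1 / 4 * ρ)).mul_left (c₂ * 4 ^ ((2 * α - 1) / 2))).congr
    fun m => by rw [uSol2Coeff, mul_pow]; ring

theorem uSol2Coeff_succ {α : ℝ} (c₂ : ℝ) (hc : ∀ n : ℕ, (3 - 2 * α) / 2 ≠ -(n : ℝ)) (m : ℕ) :
    uSol2Coeff α c₂ (m + 1) * (4 * ((3 - 2 * α) / 2 + m) * (m + 1))
      = -(uSol2Coeff α c₂ m * (1 - α + m)) := by
  have hm : 3 - 2 * α + 2 * m ≠ 0 := fun h => hc m (by linarith)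
  rw [uSol2Coeff, uSol2Coeff, F11Coeff_succ, pow_succ]
  field_simp

-- The exponents are kept in the shape `e + k * m` of `EntireCoeffs.hasDerivAt_tsum_mul_rpow`.
theorem uSol2_eq_tsum (α c₂ : ℝ) {x t : ℝ} (hx : 0 < x) (ht : 0 < t) :
    uSol2 α c₂ x t
      = ∑' m : ℕ, uSol2Coeff α c₂ m * x ^ (1 - 2 * α + 2 * m) * t ^ (α - 1 + -1 * m) := by
  rw [uSol2, F11_eq_tsum, ← tsum_mul_left]
  refine tsum_congr fun m => ?_
  have hs : 0 < x ^ 2 / (4 * t) := by positivity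
  have hlog : Real.log (x ^ 2 / (4 * t)) = 2 * Real.log x - Real.log 4 - Real.log t := by
    rw [Real.log_div (by positivity) (by positivity), Real.log_mul (by norm_num) ht.ne',
      Real.log_pow]
    push_cast; ring
  have key : t ^ (-(1 / 2) : ℝ) * (x ^ 2 / (4 * t)) ^ ((1 - 2 * α) / 2) * (x ^ 2 / (4 * t)) ^ m
      = 4 ^ ((2 * α - 1) / 2) * (1 / 4 : ℝ) ^ m * x ^ (1 - 2 * α + 2 * m)
        * t ^ (α - 1 + -1 * m) := by
    rw [one_div_pow, ← Real.rpow_natCast (x ^ 2 / (4 * t)), ← Real.rpow_natCast (4 : ℝ)]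
    simp only [Real.rpow_def_of_pos hs, Real.rpow_def_of_pos hx, Real.rpow_def_of_pos ht,
      Real.rpow_def_of_pos four_pos, hlog]
    rw [one_div (Real.exp _), ← Real.exp_neg]
    simp only [← Real.exp_add]
    ring_nf
  have hsign (z : ℝ) : (-z) ^ m = (-1) ^ m * z ^ m := by rw [← mul_pow, neg_one_mul]
  rw [uSol2Coeff, neg_div, hsign, show (-1 / 4 : ℝ) = -(1 / 4) by norm_num, hsign (1 / 4)]
  linear_combination (c₂ * F11Coeff (1 - α) ((3 - 2 * α) / 2) m * (-1) ^ m) * key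

section Derivatives

variable {α : ℝ} (c₂ : ℝ) {x t : ℝ}

theorem deriv_uSol2_time (hx : 0 < x) (ht : 0 < t) :
    deriv (fun s => uSol2 α c₂ x s) t = ∑' m : ℕ,
      uSol2Coeff α c₂ m * x ^ (1 - 2 * α + 2 * m) * (α - 1 + -1 * m)
        * t ^ (α - 1 - 1 + -1 * m) := by
  have h : (fun s => uSol2 α c₂ x s) =ᶠ[𝓝 t]
      fun s => ∑' m : ℕ, uSol2Coeff α c₂ m * x ^ (1 - 2 * α + 2 * m) * s ^ (α - 1 + -1 * m) :=
    eventually_of_mem (Ioi_mem_nhds ht) fun s hs => uSol2_eq_tsum α c₂ hx hs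
  rw [h.deriv_eq]
  exact (((entireCoeffs_uSol2Coeff α c₂).mul_rpow hx _ _).hasDerivAt_tsum_mul_rpow _ _ ht).deriv

theorem deriv_uSol2_space (hx : 0 < x) (ht : 0 < t) :
    deriv (fun s => uSol2 α c₂ s t) x = ∑' m : ℕ,
      uSol2Coeff α c₂ m * t ^ (α - 1 + -1 * m) * (1 - 2 * α + 2 * m)
        * x ^ (1 - 2 * α - 1 + 2 * m) := by
  have h : (fun s => uSol2 α c₂ s t) =ᶠ[𝓝 x]
      fun s => ∑' m : ℕ, uSol2Coeff α c₂ m * t ^ (α - 1 + -1 * m) * s ^ (1 - 2 * α + 2 * m) :=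
    eventually_of_mem (Ioi_mem_nhds hx) fun s hs => by
      simp only [uSol2_eq_tsum α c₂ hs ht]
      exact tsum_congr fun m => mul_right_comm _ _ _
  rw [h.deriv_eq]
  exact (((entireCoeffs_uSol2Coeff α c₂).mul_rpow ht _ _).hasDerivAt_tsum_mul_rpow _ _ hx).deriv

theorem iteratedDeriv_two_uSol2_space (hx : 0 < x) (ht : 0 < t) :
    iteratedDeriv 2 (fun s => uSol2 α c₂ s t) x = ∑' m : ℕ,
      uSol2Coeff α c₂ m * t ^ (α - 1 + -1 * m) * (1 - 2 * α + 2 * m) * (1 - 2 * α - 1 + 2 * m)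
        * x ^ (1 - 2 * α - 1 - 1 + 2 * m) := by
  have h : deriv (fun s => uSol2 α c₂ s t) =ᶠ[𝓝 x] fun s => ∑' m : ℕ,
      uSol2Coeff α c₂ m * t ^ (α - 1 + -1 * m) * (1 - 2 * α + 2 * m)
        * s ^ (1 - 2 * α - 1 + 2 * m) :=
    eventually_of_mem (Ioi_mem_nhds hx) fun s hs => deriv_uSol2_space c₂ hs ht
  rw [iteratedDeriv_succ, iteratedDeriv_one, h.deriv_eq]
  exact ((((entireCoeffs_uSol2Coeff α c₂).mul_rpow ht _ _).mul_add_mul_natCast _ _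
    ).hasDerivAt_tsum_mul_rpow _ _ hx).deriv

end Derivatives

section Telescoping

variable {α : ℝ} (c₂ : ℝ) {x : ℝ} (t : ℝ)

noncomputable def radialTerm (α c₂ x t : ℝ) (m : ℕ) : ℝ :=
  uSol2Coeff α c₂ m * t ^ (α - 1 + -1 * m) * (1 - 2 * α + 2 * m) * (1 - 2 * α - 1 + 2 * m)
      * x ^ (1 - 2 * α - 1 - 1 + 2 * m)
    + 2 * α / x * (uSol2Coeff α c₂ m * t ^ (α - 1 + -1 * m) * (1 - 2 * α + 2 * m)
      * x ^ (1 - 2 * α - 1 + 2 * m))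

theorem radialTerm_zero (hx : 0 < x) : radialTerm α c₂ x t 0 = 0 := by
  simp only [radialTerm, Nat.cast_zero, mul_zero, add_zero]
  rw [Real.rpow_sub_one hx.ne' (1 - 2 * α - 1)]
  field_simp
  ring

theorem radialTerm_succ (hc : ∀ n : ℕ, (3 - 2 * α) / 2 ≠ -(n : ℝ)) (hx : 0 < x) (m : ℕ) :
    radialTerm α c₂ x t (m + 1)
      = uSol2Coeff α c₂ m * x ^ (1 - 2 * α + 2 * m) * (α - 1 + -1 * m)
        * t ^ (α - 1 - 1 + -1 * m) := by
  rw [radialTerm,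
    show 1 - 2 * α - 1 - 1 + 2 * ((m + 1 : ℕ) : ℝ) = 1 - 2 * α + 2 * m by push_cast; ring,
    show 1 - 2 * α - 1 + 2 * ((m + 1 : ℕ) : ℝ) = 1 - 2 * α + 2 * m + 1 by push_cast; ring,
    show α - 1 + -1 * ((m + 1 : ℕ) : ℝ) = α - 1 - 1 + -1 * m by push_cast; ring,
    Real.rpow_add_one hx.ne']
  push_cast
  linear_combination
    (x ^ (1 - 2 * α + 2 * m) * t ^ (α - 1 - 1 + -1 * m)) * uSol2Coeff_succ c₂ hc m
    + (2 * α * uSol2Coeff α c₂ (m + 1) * t ^ (α - 1 - 1 + -1 * m) * (1 - 2 * α + 2 * (m + 1))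
      * x ^ (1 - 2 * α + 2 * m)) * inv_mul_cancel₀ hx.ne'

theorem hasSum_radialTerm (hx : 0 < x) (ht : 0 < t) :
    HasSum (radialTerm α c₂ x t)
      (∑' m : ℕ, uSol2Coeff α c₂ m * t ^ (α - 1 + -1 * m) * (1 - 2 * α + 2 * m)
          * (1 - 2 * α - 1 + 2 * m) * x ^ (1 - 2 * α - 1 - 1 + 2 * m)
        + 2 * α / x * ∑' m : ℕ, uSol2Coeff α c₂ m * t ^ (α - 1 + -1 * m) * (1 - 2 * α + 2 * m)
          * x ^ (1 - 2 * α - 1 + 2 * m)) := by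
  have hb := ((entireCoeffs_uSol2Coeff α c₂).mul_rpow ht (α - 1) (-1)).mul_add_mul_natCast
    (1 - 2 * α) 2
  exact ((hb.mul_add_mul_natCast _ _).summable_mul_rpow hx _ _).hasSum.add
    ((hb.summable_mul_rpow hx _ _).hasSum.mul_left _)

theorem tsum_time_eq_tsum_radialTerm (hc : ∀ n : ℕ, (3 - 2 * α) / 2 ≠ -(n : ℝ)) (hx : 0 < x)
    (ht : 0 < t) :
    ∑' m : ℕ, uSol2Coeff α c₂ m * x ^ (1 - 2 * α + 2 * m) * (α - 1 + -1 * m)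
        * t ^ (α - 1 - 1 + -1 * m)
      = ∑' m, radialTerm α c₂ x t m := by
  rw [(hasSum_radialTerm c₂ t hx ht).summable.tsum_eq_zero_add, radialTerm_zero c₂ t hx, zero_add]
  exact tsum_congr fun m => (radialTerm_succ c₂ t hc hx m).symm

end Telescoping

theorem uSol2_solves_general (α c₂ : ℝ)
    (hc : ∀ n : ℕ, (3 - 2 * α) / 2 ≠ -(n : ℝ)) :
    ∀ x t : ℝ, 0 < x → 0 < t →
      deriv (fun s => uSol2 α c₂ x s) t
        - iteratedDeriv 2 (fun s => uSol2 α c₂ s t) x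
        - (2 * α / x) * deriv (fun s => uSol2 α c₂ s t) x = 0 := by
  intro x t hx ht
  rw [deriv_uSol2_time c₂ hx ht, iteratedDeriv_two_uSol2_space c₂ hx ht,
    deriv_uSol2_space c₂ hx ht, tsum_time_eq_tsum_radialTerm c₂ t hc hx ht,
    (hasSum_radialTerm c₂ t hx ht).tsum_eq]
  ring

theorem uSol2_solves (α c₂ : ℝ) (hα : 0 < α)
    (hc : ∀ n : ℕ, (3 - 2 * α) / 2 ≠ -(n : ℝ)) :
    ∀ x t : ℝ, 0 < x → 0 < t →
      deriv (fun s => uSol2 α c₂ x s) t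
        - iteratedDeriv 2 (fun s => uSol2 α c₂ s t) x
        - (2 * α / x) * deriv (fun s => uSol2 α c₂ s t) x = 0 :=
  uSol2_solves_general α c₂ hc
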